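/- Let k be even and let \Gamma be a k-configuration of a convex point set with n red and n blue points. For a uniformly random chunk matching M of \Gamma, the expected number of edges in the derived separated monochromatic matching is at least n/2. -/

import Mathlib

open scoped BigOperators

namespace SepMatchPaper

/-- Orientation cross product of the triple `(o, a, b)` in the plane. -/
def cross (o a b : ℝ × ℝ) : ℝ :=
  (a.1 - o.1) * (b.2 - o.2) - (a.2 - o.2) * (b.1 - o.1)

/-- The first `m` points of `p` are in convex position, listed in clockwise
order: every triple of points, taken in index order, is oriented clockwise. -/
def ConvexCW (m : ℕ) (p : ℕ → ℝ × ℝ) : Prop :=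
  ∀ i j l : ℕ, i < j → j < l → l < m → cross (p i) (p j) (p l) < 0

/-- Number of indices of color `b` in the finite set `S` (true = red, false = blue). -/
def cnt (c : ℕ → Bool) (b : Bool) (S : Finset ℕ) : ℕ :=
  (S.filter fun x => c x = b).card

/-- The coloring `c` of the `2n` points has exactly `n` red and `n` blue points. -/
def Balanced (n : ℕ) (c : ℕ → Bool) : Prop :=
  cnt c true (Finset.range (2 * n)) = n ∧ cnt c false (Finset.range (2 * n)) = n

/-- The closed segment between the points number `e.1` and `e.2`. -/
def seg (p : ℕ → ℝ × ℝ) (e : ℕ × ℕ) : Set (ℝ × ℝ) :=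
  segment ℝ (p e.1) (p e.2)

/-- `L` is a line in the plane. -/
def IsLine (L : Set (ℝ × ℝ)) : Prop :=
  ∃ a b : ℝ × ℝ, a ≠ b ∧ L = (affineSpan ℝ ({a, b} : Set (ℝ × ℝ)) : Set (ℝ × ℝ))

/-- The endpoint of the edge `e` selected by `s`. -/
def ep (e : ℕ × ℕ) (s : Bool) : ℕ := if s then e.1 else e.2

/-- `e 0, …, e (K-1)` is a separated matching on the first `m` points:
all `2K` endpoints are pairwise distinct, every edge has an admissible color
pair (`good` is `(· ≠ ·)` for bichromatic and `(· = ·)` for monochromatic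
matchings), the closed segments are pairwise disjoint, and one common line
meets all of them. -/
def SepMatching (m : ℕ) (p : ℕ → ℝ × ℝ) (c : ℕ → Bool) (good : Bool → Bool → Prop)
    (K : ℕ) (e : ℕ → ℕ × ℕ) : Prop :=
  (∀ i, i < K → (e i).1 < m ∧ (e i).2 < m) ∧
  (∀ i, i < K → good (c (e i).1) (c (e i).2)) ∧
  (∀ i j : ℕ, ∀ s t : Bool, i < K → j < K → (i, s) ≠ (j, t) → ep (e i) s ≠ ep (e j) t) ∧
  (∀ i j, i < K → j < K → i ≠ j → Disjoint (seg p (e i)) (seg p (e j))) ∧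
  ∃ L, IsLine L ∧ ∀ i, i < K → (seg p (e i) ∩ L).Nonempty

/-- `q 0, …, q (L-1)` is a non-crossing alternating path on the first `m`
points: pairwise distinct points, consecutive points of different colors, and
the relative interiors (open segments) of any two edges are disjoint. -/
def AltPath (m : ℕ) (p : ℕ → ℝ × ℝ) (c : ℕ → Bool) (L : ℕ) (q : ℕ → ℕ) : Prop :=
  (∀ i, i < L → q i < m) ∧
  (∀ i j, i < L → j < L → q i = q j → i = j) ∧
  (∀ i, i + 1 < L → c (q i) ≠ c (q (i + 1))) ∧
  (∀ i j, i + 1 < L → j + 1 < L → i ≠ j →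
    Disjoint (openSegment ℝ (p (q i)) (p (q (i + 1))))
      (openSegment ℝ (p (q j)) (p (q (j + 1)))))

/-- Starting position of the `i`-th consecutive block with lengths `len`. -/
def blockStart (len : ℕ → ℕ) (i : ℕ) : ℕ := ∑ j ∈ Finset.range i, len j

/-- The `i`-th consecutive block (as a set of indices). -/
def block (len : ℕ → ℕ) (i : ℕ) : Finset ℕ :=
  Finset.Ico (blockStart len i) (blockStart len i + len i)

/-- The `i`-th consecutive cyclic block modulo `m`, starting at offset `s0`. -/
def cblock (m s0 : ℕ) (len : ℕ → ℕ) (i : ℕ) : Finset ℕ :=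
  (Finset.Ico (s0 + blockStart len i) (s0 + blockStart len i + len i)).image (· % m)

/-- A `(k,0)`-partition of the cyclically colored point set `{0, …, 2n-1}`:
starting from the point `0`, greedily take minimal `k`-chunks (consecutive
blocks with exactly `k` points of one color — the chunk's color — fewer than
`k` of the other color, and ending at a point of the chunk's color); the
remaining uncovered points contain fewer than `k` points of each color. -/
structure KZeroPartition (n k : ℕ) (c : ℕ → Bool) where
  t : ℕ
  len : ℕ → ℕ
  col : ℕ → Bool
  covered : blockStart len t ≤ 2 * n
  exact_maj : ∀ i, i < t → cnt c (col i) (block len i) = k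
  lt_min : ∀ i, i < t → cnt c (!(col i)) (block len i) < k
  len_pos : ∀ i, i < t → 0 < len i
  last_col : ∀ i, i < t → c (blockStart len i + len i - 1) = col i
  unc_true : cnt c true (Finset.Ico (blockStart len t) (2 * n)) < k
  unc_false : cnt c false (Finset.Ico (blockStart len t) (2 * n)) < k

namespace KZeroPartition

variable {n k : ℕ} {c : ℕ → Bool}

/-- Number of red chunks. -/
def nR (Γ : KZeroPartition n k c) : ℕ :=
  ((Finset.range Γ.t).filter fun i => Γ.col i = true).card

/-- Number of blue chunks. -/
def nB (Γ : KZeroPartition n k c) : ℕ :=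
  ((Finset.range Γ.t).filter fun i => Γ.col i = false).card

/-- Average index of the chunks of color `b` (`0` if there are none); the
index of a chunk is its number of minority points divided by `k`. -/
def avg (Γ : KZeroPartition n k c) (b : Bool) : ℚ :=
  if ((Finset.range Γ.t).filter fun i => Γ.col i = b).card = 0 then 0
  else (∑ i ∈ (Finset.range Γ.t).filter fun i => Γ.col i = b,
      (cnt c (!b) (block Γ.len i) : ℚ)) /
    (k * ((Finset.range Γ.t).filter fun i => Γ.col i = b).card)

/-- The index of the partition: the larger of the two average indices. -/
def index (Γ : KZeroPartition n k c) : ℚ := max (Γ.avg true) (Γ.avg false)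

end KZeroPartition

/-- A `k`-configuration: a partition of the whole cyclic point set
`{0, …, 2n-1}` into consecutive cyclic `k`-chunks (exactly `k` points of the
chunk's color, fewer than `k` of the other color), with no uncovered points. -/
structure KConfig (n k : ℕ) (c : ℕ → Bool) where
  t : ℕ
  s0 : ℕ
  len : ℕ → ℕ
  col : ℕ → Bool
  covers : blockStart len t = 2 * n
  exact_maj : ∀ i, i < t → cnt c (col i) (cblock (2 * n) s0 len i) = k
  lt_min : ∀ i, i < t → cnt c (!(col i)) (cblock (2 * n) s0 len i) < k

namespace KConfig

variable {n k : ℕ} {c : ℕ → Bool}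

/-- Number of red chunks. -/
def nR (Γ : KConfig n k c) : ℕ :=
  ((Finset.range Γ.t).filter fun i => Γ.col i = true).card

/-- Number of blue chunks. -/
def nB (Γ : KConfig n k c) : ℕ :=
  ((Finset.range Γ.t).filter fun i => Γ.col i = false).card

/-- Number of minority-color points of the `i`-th chunk. -/
def mino (Γ : KConfig n k c) (i : ℕ) : ℕ :=
  cnt c (!(Γ.col i)) (cblock (2 * n) Γ.s0 Γ.len i)

/-- Average index of the chunks of color `b` (`0` if there are none). -/
def avg (Γ : KConfig n k c) (b : Bool) : ℚ :=
  if ((Finset.range Γ.t).filter fun i => Γ.col i = b).card = 0 then 0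
  else (∑ i ∈ (Finset.range Γ.t).filter fun i => Γ.col i = b, (Γ.mino i : ℚ)) /
    (k * ((Finset.range Γ.t).filter fun i => Γ.col i = b).card)

/-- The index of the configuration. -/
def index (Γ : KConfig n k c) : ℚ := max (Γ.avg true) (Γ.avg false)

/-- The max-index color. -/
def maxColor (Γ : KConfig n k c) : Bool :=
  if Γ.avg false ≤ Γ.avg true then true else false

end KConfig

/-- Number of points of color `b` among the points of the cyclic interval
`[a, x]` (positions taken modulo `m`). -/
def rank (m : ℕ) (c : ℕ → Bool) (b : Bool) (a x : ℕ) : ℕ :=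
  cnt c b ((Finset.Ico a (x + 1)).image (· % m))

/-- The middle `(k/3)`-subchunk of the `i`-th chunk of a `k`-configuration:
the (greedy, minimal) second of the three consecutive subchunks containing
exactly `k/3` points of the chunk's color each. -/
def KConfig.midBlock {n k : ℕ} {c : ℕ → Bool} (Γ : KConfig n k c) (i : ℕ) : Finset ℕ :=
  ((Finset.Ico (Γ.s0 + blockStart Γ.len i) (Γ.s0 + blockStart Γ.len i + Γ.len i)).filter
      fun x =>
        (k / 3 < rank (2 * n) c (Γ.col i) (Γ.s0 + blockStart Γ.len i) x ∨
          (rank (2 * n) c (Γ.col i) (Γ.s0 + blockStart Γ.len i) x = k / 3 ∧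
            c (x % (2 * n)) ≠ Γ.col i)) ∧
        (rank (2 * n) c (Γ.col i) (Γ.s0 + blockStart Γ.len i) x < 2 * (k / 3) ∨
          (rank (2 * n) c (Γ.col i) (Γ.s0 + blockStart Γ.len i) x = 2 * (k / 3) ∧
            c (x % (2 * n)) = Γ.col i))).image (· % (2 * n))

/-- Number of runs (maximal constant-color cyclic blocks) of `c` on
`{0, …, m-1}`, counted as the number of cyclic color changes. -/
def runCount (m : ℕ) (c : ℕ → Bool) : ℕ :=
  ((Finset.range m).filter fun i => c i ≠ c ((i + 1) % m)).card

/-- `a` enumerates `L` cyclically increasing positions of a circular word of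
length `m`: strictly increasing and contained in one window of length `m`. -/
def CircSubseq (m L : ℕ) (a : ℕ → ℕ) : Prop :=
  (∀ i j, i < j → j < L → a i < a j) ∧ ∀ i, i < L → a i < a 0 + m

/-- The circular word `w` (of length `m`) has an antipalindromic subsequence
of length `L`. -/
def HasAntipalSubseq (m : ℕ) (w : ℕ → Bool) (L : ℕ) : Prop :=
  ∃ a : ℕ → ℕ, CircSubseq m L a ∧ ∀ i, i < L → w (a i % m) ≠ w (a (L - 1 - i) % m)

/-- The circular word `w` (of length `m`) has a palindromic subsequence of
length `L`. -/
def HasPalSubseq (m : ℕ) (w : ℕ → Bool) (L : ℕ) : Prop :=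
  ∃ a : ℕ → ℕ, CircSubseq m L a ∧ ∀ i, i < L → w (a i % m) = w (a (L - 1 - i) % m)

/-- A set of index pairs forms a separated set of segments among the first `m`
points: pairwise disjoint segments met by a common line. -/
def SepMatchSet (m : ℕ) (p : ℕ → ℝ × ℝ) (S : Set (ℕ × ℕ)) : Prop :=
  (∀ e ∈ S, e.1 < m ∧ e.2 < m ∧ e.1 ≠ e.2) ∧
  (∀ e ∈ S, ∀ f ∈ S, e ≠ f → Disjoint (seg p e) (seg p f)) ∧
  ∃ L, IsLine L ∧ ∀ e ∈ S, (seg p e ∩ L).Nonempty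

/-!
For chunks `C_j`, `C_j'` the derived matching has at least as many edges as `C_j'` has points of
the color of `C_j`: exactly `k` if the colors agree, and `mino j'` otherwise, which is at most
`max (mino j) (mino j')`. Summed over `j'` this count is `n`, whatever `j` is, and as `i` runs
over the `t` chunk matchings, `M_i` pairs `C_j` with every chunk exactly once. Hence the double
sum over `i` and `j` is at least `n t`; it counts each matched pair of chunks twice, whence the
factor `1/2`.
-/

open Finset

theorem sum_range_sub_mod {M : Type*} [AddCommMonoid M] (f : ℕ → M) {t j : ℕ} (hj : j ≤ t) :
    ∑ i ∈ range t, f ((i + t - j) % t) = ∑ i ∈ range t, f i := by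
  refine sum_nbij' (fun i => (i + t - j) % t) (fun i => (i + j) % t) ?_ ?_ ?_ ?_ fun _ _ => rfl
  all_goals intro i hi; simp only [mem_range] at hi ⊢
  · exact Nat.mod_lt _ (by omega)
  · exact Nat.mod_lt _ (by omega)
  · rw [Nat.mod_add_mod, Nat.sub_add_cancel (by omega), Nat.add_mod_right, Nat.mod_eq_of_lt hi]
  · rw [Nat.add_sub_assoc hj, Nat.mod_add_mod, add_assoc, Nat.add_sub_cancel' hj,
      Nat.add_mod_right, Nat.mod_eq_of_lt hi]

theorem injOn_mod_Ico (m a : ℕ) : Set.InjOn (· % m) (Ico a (a + m) : Set ℕ) :=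
  injOn_of_card_image_eq <| by
    rw [Nat.image_Ico_mod, card_range, Nat.card_Ico, Nat.add_sub_cancel_left]

theorem blockStart_succ (len : ℕ → ℕ) (i : ℕ) :
    blockStart len (i + 1) = blockStart len i + len i :=
  sum_range_succ _ _

theorem blockStart_mono (len : ℕ → ℕ) : Monotone (blockStart len) := fun _ _ h =>
  sum_le_sum_of_subset (range_subset_range.2 h)

theorem sum_card_filter_Ico_blockStart (p : ℕ → Prop) [DecidablePred p] (a : ℕ) (len : ℕ → ℕ)
    (t : ℕ) :
    ∑ i ∈ range t, #{x ∈ Ico (a + blockStart len i) (a + blockStart len i + len i) | p x} =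
      #{x ∈ Ico a (a + blockStart len t) | p x} := by
  induction t with
  | zero => simp [blockStart]
  | succ t ih =>
    rw [sum_range_succ, ih, blockStart_succ, ← add_assoc, ← card_union_of_disjoint
      (disjoint_filter_filter (Ico_disjoint_Ico_consecutive _ _ _)), ← filter_union,
      Ico_union_Ico_eq_Ico (by omega) (by omega)]

theorem cnt_cblock {m : ℕ} (s0 : ℕ) {len : ℕ → ℕ} {i : ℕ} (c : ℕ → Bool) (b : Bool)
    (hi : blockStart len i + len i ≤ m) :
    cnt c b (cblock m s0 len i) =
      #{x ∈ Ico (s0 + blockStart len i) (s0 + blockStart len i + len i) | c (x % m) = b} := by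
  rw [cnt, cblock, filter_image]
  refine card_image_of_injOn ((injOn_mod_Ico m s0).mono fun x hx => ?_)
  have hx := mem_Ico.1 (mem_filter.1 hx).1
  rw [mem_coe, mem_Ico]
  omega

theorem sum_cnt_cblock {m t : ℕ} (s0 : ℕ) {len : ℕ → ℕ} (c : ℕ → Bool) (b : Bool)
    (hcov : blockStart len t = m) :
    ∑ i ∈ range t, cnt c b (cblock m s0 len i) = cnt c b (range m) := by
  have hblock (i : ℕ) (hi : i ∈ range t) : blockStart len i + len i ≤ m :=
    hcov ▸ blockStart_succ len i ▸ blockStart_mono len (mem_range.1 hi)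
  rw [sum_congr rfl fun i hi => cnt_cblock s0 c b (hblock i hi), sum_card_filter_Ico_blockStart,
    hcov, cnt, ← Nat.image_Ico_mod s0 m, filter_image, card_image_of_injOn]
  exact (injOn_mod_Ico m s0).mono (filter_subset _ _)

namespace KConfig

variable {n k : ℕ} {c : ℕ → Bool} (Γ : KConfig n k c)

/-- Number of edges of the separated monochromatic matching derived from the chunk pair
`(C_j, C_j')`. -/
def monoEdges (j j' : ℕ) : ℚ :=
  if Γ.col j = Γ.col j' then (k : ℚ) else max (Γ.mino j : ℚ) (Γ.mino j' : ℚ)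

theorem sum_cnt_cblock_eq (hbal : Balanced n c) (b : Bool) :
    ∑ j ∈ range Γ.t, cnt c b (cblock (2 * n) Γ.s0 Γ.len j) = n := by
  rw [sum_cnt_cblock Γ.s0 c b Γ.covers]
  cases b
  exacts [hbal.2, hbal.1]

theorem cnt_le_monoEdges (j : ℕ) {j' : ℕ} (hj' : j' < Γ.t) :
    (cnt c (Γ.col j) (cblock (2 * n) Γ.s0 Γ.len j') : ℚ) ≤ Γ.monoEdges j j' := by
  unfold monoEdges
  split_ifs with h
  · rw [h, Γ.exact_maj j' hj']
  · rw [Bool.eq_not_iff.2 h]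
    exact le_max_right _ _

theorem natCast_mul_t_le_sum_monoEdges (hbal : Balanced n c) :
    (n : ℚ) * Γ.t ≤ ∑ i ∈ range Γ.t, ∑ j ∈ range Γ.t, Γ.monoEdges j ((i + Γ.t - j) % Γ.t) :=
  calc (n : ℚ) * Γ.t
      = ∑ j ∈ range Γ.t, (n : ℚ) := by rw [sum_const, card_range, nsmul_eq_mul, mul_comm]
    _ = ∑ j ∈ range Γ.t, ∑ j' ∈ range Γ.t,
          (cnt c (Γ.col j) (cblock (2 * n) Γ.s0 Γ.len j') : ℚ) :=
        sum_congr rfl fun j _ => by rw [← Nat.cast_sum, Γ.sum_cnt_cblock_eq hbal]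
    _ ≤ ∑ j ∈ range Γ.t, ∑ j' ∈ range Γ.t, Γ.monoEdges j j' :=
        sum_le_sum fun j _ => sum_le_sum fun _ hj' => Γ.cnt_le_monoEdges j (mem_range.1 hj')
    _ = ∑ j ∈ range Γ.t, ∑ i ∈ range Γ.t, Γ.monoEdges j ((i + Γ.t - j) % Γ.t) :=
        sum_congr rfl fun j hj => (sum_range_sub_mod _ (mem_range.1 hj).le).symm
    _ = _ := sum_comm

end KConfig

theorem random_chunk_matching_expectation_mono_general
    (n k : ℕ) (c : ℕ → Bool) (hbal : Balanced n c) (Γ : KConfig n k c) :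
    (n : ℚ) / 2 ≤
      (∑ i ∈ Finset.range Γ.t, (1 / 2 : ℚ) *
          ∑ j ∈ Finset.range Γ.t,
            if Γ.col j = Γ.col ((i + Γ.t - j) % Γ.t) then (k : ℚ)
            else max (Γ.mino j : ℚ) (Γ.mino ((i + Γ.t - j) % Γ.t) : ℚ)) / Γ.t := by
  rcases Nat.eq_zero_or_pos Γ.t with ht | ht
  · -- the right side is then `_ / 0 = 0`, so the claim needs `n = 0`
    have hn : n = 0 := by simpa [ht, blockStart] using Γ.covers.symm
    simp [ht, hn]
  · rw [← mul_sum, le_div_iff₀ (by exact_mod_cast ht)]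
    have hsum := Γ.natCast_mul_t_le_sum_monoEdges hbal
    unfold KConfig.monoEdges at hsum
    linarith

/-- monochromatic analogue of the random chunk matching bound,
for even `k`: the expected number of edges of the derived separated
monochromatic matching (`k` edges for same-colored pairs, the larger minority
count for a red–blue pair, `k/2` for a chunk matched to itself) is at least
`n/2`. -/
theorem random_chunk_matching_expectation_mono
    (n k : ℕ) (hk : Even k) (c : ℕ → Bool) (hbal : Balanced n c) (Γ : KConfig n k c) :
    (n : ℚ) / 2 ≤
      (∑ i ∈ Finset.range Γ.t, (1 / 2 : ℚ) *
          ∑ j ∈ Finset.range Γ.t,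
            if Γ.col j = Γ.col ((i + Γ.t - j) % Γ.t) then (k : ℚ)
            else max (Γ.mino j : ℚ) (Γ.mino ((i + Γ.t - j) % Γ.t) : ℚ)) / Γ.t :=
  random_chunk_matching_expectation_mono_general n k c hbal Γ

end SepMatchPaper
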